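/- arXiv:math/0112281 — 6 statements merged into one kernel-verified Lean document; each statement's English description precedes it below -/
import Mathlib

section
/- Fix integers l ≥ 2 and k ≥ 1, and let F(n) = ∑_{w ∈ [k]^n} q^{#τ(w)} ∈ ℤ[q], where τ = 11⋯1 (l letters). Then for every integer n ≥ l, F(n) = (k - 1 + q)·F(n-1) + (k-1)·(1 - q)·∑_{d=2}^{l-1} F(n-d), as an identity of polynomials in q (for l = 2 the sum over d is empty). -/
open Polynomial

/-- The `i`-th letter (1-based value in `{1,…,k}`) of a word `w ∈ [k]^n`,
with value `0` outside the word. -/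
def letter {n k : ℕ} (w : Fin n → Fin k) (i : ℕ) : ℕ :=
  if h : i < n then (w ⟨i, h⟩ : ℕ) + 1 else 0

/-- `#τ(w)` for `τ = 11⋯1` (`l` letters): the number of indices `i` (0-based,
`i + l ≤ n`) such that `w i = w (i+1) = ⋯ = w (i+l-1)`. -/
def occOnes {n k : ℕ} (l : ℕ) (w : Fin n → Fin k) : ℕ :=
  ((Finset.range n).filter
    (fun i => i + l ≤ n ∧ ∀ d < l, letter w (i + d) = letter w i)).card

/-!
Write `F m = ∑_{w ∈ [k]^m} q^{#τ(w)}` (`occPoly`) and `D r m` for the same sum restricted to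
words whose last `r` letters are not all equal (`nonconstSuffixPoly`). Appending a letter `a` to a word `v`
creates a new occurrence of `1⋯1` exactly when `a` equals the last `l - 1` letters of `v`, so
`F (m + 2) = (k - 1 + q) F (m + 1) - (q - 1) D (l - 1) (m + 1)`. A word whose last `r + 1 ≤ l`
letters are not all equal either ends with a new letter (`k - 1` choices) or repeats the last
letter of a word counted by `D r`; no occurrence is created in either case, so
`D (r + 1) (m + 2) = (k - 1) F (m + 1) + D r (m + 1)`. Unrolling down to `D 1 = 0` expresses
`D (l - 1)` through `F (m + 1 - d)`, `2 ≤ d ≤ l - 1`.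
-/

namespace OnesPattern

variable {m n k : ℕ}

theorem letter_snoc_of_lt (w : Fin m → Fin k) (a : Fin k) {i : ℕ} (hi : i < m) :
    letter (Fin.snoc w a : Fin (m + 1) → Fin k) i = letter w i := by
  have e : (⟨i, by omega⟩ : Fin (m + 1)) = Fin.castSucc ⟨i, hi⟩ := rfl
  simp only [letter, dif_pos hi, dif_pos (show i < m + 1 by omega), e, Fin.snoc_castSucc]

theorem letter_snoc_self (w : Fin m → Fin k) (a : Fin k) :
    letter (Fin.snoc w a : Fin (m + 1) → Fin k) m = a + 1 := by
  have e : (⟨m, by omega⟩ : Fin (m + 1)) = Fin.last m := rfl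
  simp only [letter, dif_pos (show m < m + 1 by omega), e, Fin.snoc_last]

theorem letter_last (v : Fin (m + 1) → Fin k) : letter v m = v (Fin.last m) + 1 := by
  simp [letter, Fin.last]

/-- The last `r` letters of `w` coincide; for `r ≥ n` this says that all letters do. -/
def SuffixConst (r : ℕ) (w : Fin n → Fin k) : Prop :=
  ∀ j < n, n ≤ j + r → letter w j = letter w (n - 1)

instance (r : ℕ) : DecidablePred (SuffixConst r : (Fin n → Fin k) → Prop) := fun w => by
  unfold SuffixConst; infer_instance

theorem suffixConst_one (w : Fin n → Fin k) : SuffixConst 1 w := fun j _ _ => by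
  rw [show j = n - 1 by omega]

theorem SuffixConst.mono {r s : ℕ} {w : Fin n → Fin k} (h : SuffixConst r w) (hsr : s ≤ r) :
    SuffixConst s w := fun j hj hjs => h j hj (by omega)

theorem forall_letter_eq_iff_suffixConst {l i : ℕ} (w : Fin n → Fin k) (hin : i + l = n) :
    (∀ d < l, letter w (i + d) = letter w i) ↔ SuffixConst l w := by
  constructor
  · intro h j hj hjn
    have hl : l - 1 < l := by omega
    rw [show j = i + (j - i) by omega, h _ (by omega), show n - 1 = i + (l - 1) by omega, h _ hl]
  · intro h d hd
    rw [h (i + d) (by omega) (by omega), h i (by omega) (by omega)]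

theorem suffixConst_succ_snoc_iff {r : ℕ} (hr : 1 ≤ r) (v : Fin (m + 1) → Fin k) (a : Fin k) :
    SuffixConst (r + 1) (Fin.snoc v a : Fin (m + 2) → Fin k) ↔
      SuffixConst r v ∧ a = v (Fin.last m) := by
  simp only [SuffixConst, Nat.add_sub_cancel, letter_snoc_self]
  constructor
  · intro h
    have ha : v (Fin.last m) + 1 = (a : ℕ) + 1 := by
      rw [← letter_last, ← letter_snoc_of_lt v a (by omega : m < m + 1)]
      exact h m (by omega) (by omega)
    refine ⟨fun j hj hjr => ?_, Fin.ext (by omega)⟩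
    rw [← letter_snoc_of_lt v a hj, h j (by omega) (by omega), letter_last, ha]
  · rintro ⟨h, rfl⟩ j hj hjr
    rcases Nat.lt_succ_iff_lt_or_eq.mp hj with hj | rfl
    · rw [letter_snoc_of_lt v _ hj, h j hj (by omega), letter_last]
    · exact letter_snoc_self v _

theorem occOnes_snoc {l : ℕ} (hl : 1 ≤ l) (w : Fin m → Fin k) (a : Fin k) :
    occOnes l (Fin.snoc w a : Fin (m + 1) → Fin k) = occOnes l w +
      if l ≤ m + 1 ∧ SuffixConst l (Fin.snoc w a : Fin (m + 1) → Fin k) then 1 else 0 := by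
  set u : Fin (m + 1) → Fin k := Fin.snoc w a
  have hmem : ∀ i, (i < m + 1 ∧ i + l ≤ m + 1 ∧ ∀ d < l, letter u (i + d) = letter u i) ↔
      (i = m + 1 - l ∧ l ≤ m + 1 ∧ SuffixConst l u) ∨
        (i < m ∧ i + l ≤ m ∧ ∀ d < l, letter w (i + d) = letter w i) := by
    intro i
    rcases lt_trichotomy (i + l) (m + 1) with h | h | h
    · have : (∀ d < l, letter u (i + d) = letter u i) ↔ ∀ d < l, letter w (i + d) = letter w i :=
        forall₂_congr fun d hd => by
          rw [letter_snoc_of_lt w a (by omega), letter_snoc_of_lt w a (by omega)]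
      grind
    · have := forall_letter_eq_iff_suffixConst u h
      grind
    · grind
  unfold occOnes
  split_ifs with hQ
  · rw [← Finset.card_insert_of_notMem (s := (Finset.range m).filter _) (a := m + 1 - l)
      (by simp only [Finset.mem_filter]; omega)]
    congr 1
    ext i
    simpa [hQ] using hmem i
  · rw [add_zero]
    congr 1
    ext i
    simpa [hQ] using hmem i

theorem sum_fun_fin_succ_snoc {α M : Type*} [Fintype α] [AddCommMonoid M]
    (g : (Fin (m + 1) → α) → M) : ∑ w, g w = ∑ v : Fin m → α, ∑ a, g (Fin.snoc v a) := by
  rw [← (Fin.snocEquiv fun _ => α).sum_comp, Fintype.sum_prod_type, Finset.sum_comm]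
  rfl

noncomputable def occPoly (l k m : ℕ) : ℤ[X] :=
  ∑ w : Fin m → Fin k, X ^ occOnes l w

noncomputable def nonconstSuffixPoly (l k r m : ℕ) : ℤ[X] :=
  ∑ w : Fin m → Fin k with ¬SuffixConst r w, X ^ occOnes l w

theorem sum_pow_occOnes_snoc {l : ℕ} (hl : 2 ≤ l) (hlm : l ≤ m + 2) (v : Fin (m + 1) → Fin k) :
    ∑ a, (X : ℤ[X]) ^ occOnes l (Fin.snoc v a : Fin (m + 2) → Fin k) =
      ((k : ℤ[X]) - 1 + X) * X ^ occOnes l v -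
        (X - 1) * if ¬SuffixConst (l - 1) v then X ^ occOnes l v else 0 := by
  obtain ⟨r, rfl⟩ : ∃ r, l = r + 1 := ⟨l - 1, by omega⟩
  have hterm : ∀ a, (X : ℤ[X]) ^ occOnes (r + 1) (Fin.snoc v a : Fin (m + 2) → Fin k) =
      X ^ occOnes (r + 1) v +
        if SuffixConst r v ∧ a = v (Fin.last m) then (X - 1) * X ^ occOnes (r + 1) v else 0 := by
    intro a
    simp only [occOnes_snoc (by omega : 1 ≤ r + 1), suffixConst_succ_snoc_iff (by omega : 1 ≤ r),
      hlm, true_and]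
    split_ifs <;> ring
  by_cases h : SuffixConst r v <;> simp [hterm, Finset.sum_add_distrib, h] <;> ring

theorem sum_pow_occOnes_snoc_of_not_suffixConst {l r : ℕ} (hr : 1 ≤ r) (hrl : r + 1 ≤ l)
    (v : Fin (m + 1) → Fin k) :
    ∑ a with ¬SuffixConst (r + 1) (Fin.snoc v a : Fin (m + 2) → Fin k),
        (X : ℤ[X]) ^ occOnes l (Fin.snoc v a : Fin (m + 2) → Fin k) =
      ((k : ℤ[X]) - 1) * X ^ occOnes l v + if ¬SuffixConst r v then X ^ occOnes l v else 0 := by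
  have hocc : ∀ a, ¬SuffixConst (r + 1) (Fin.snoc v a : Fin (m + 2) → Fin k) →
      occOnes l (Fin.snoc v a : Fin (m + 2) → Fin k) = occOnes l v := fun a ha => by
    rw [occOnes_snoc (by omega), if_neg fun h => ha (h.2.mono hrl), add_zero]
  rw [Finset.sum_congr rfl fun a ha => by rw [hocc a (Finset.mem_filter.mp ha).2]]
  simp only [suffixConst_succ_snoc_iff hr]
  by_cases h : SuffixConst r v
  · have hk : 1 ≤ k := Fin.pos (v (Fin.last m))
    simp [h, Finset.filter_ne', Finset.card_erase_of_mem, hk]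
  · simp [h]
    ring

theorem occPoly_add_two {l : ℕ} (hl : 2 ≤ l) (hlm : l ≤ m + 2) :
    occPoly l k (m + 2) = ((k : ℤ[X]) - 1 + X) * occPoly l k (m + 1) -
      (X - 1) * nonconstSuffixPoly l k (l - 1) (m + 1) := by
  simp only [occPoly, nonconstSuffixPoly, sum_fun_fin_succ_snoc (m := m + 1),
    sum_pow_occOnes_snoc hl hlm, Finset.sum_sub_distrib, Finset.mul_sum, Finset.sum_filter]

theorem nonconstSuffixPoly_add_two {l r : ℕ} (hr : 1 ≤ r) (hrl : r + 1 ≤ l) :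
    nonconstSuffixPoly l k (r + 1) (m + 2) =
      ((k : ℤ[X]) - 1) * occPoly l k (m + 1) + nonconstSuffixPoly l k r (m + 1) := by
  rw [nonconstSuffixPoly, Finset.sum_filter, sum_fun_fin_succ_snoc]
  simp only [← Finset.sum_filter, sum_pow_occOnes_snoc_of_not_suffixConst hr hrl,
    Finset.sum_add_distrib, occPoly, nonconstSuffixPoly, Finset.mul_sum]

theorem nonconstSuffixPoly_one (l m : ℕ) : nonconstSuffixPoly l k 1 m = 0 := by
  simp [nonconstSuffixPoly, suffixConst_one]

theorem nonconstSuffixPoly_eq_sum {l r : ℕ} (hrl : r < l) (hrm : r ≤ m) :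
    nonconstSuffixPoly l k (r + 1) (m + 1) =
      ((k : ℤ[X]) - 1) * ∑ j ∈ Finset.range r, occPoly l k (m - j) := by
  induction r generalizing m with
  | zero => simp [nonconstSuffixPoly_one]
  | succ r ih =>
    obtain ⟨m, rfl⟩ : ∃ m', m = m' + 1 := ⟨m - 1, by omega⟩
    rw [nonconstSuffixPoly_add_two (by omega) (by omega), ih (by omega) (by omega),
      Finset.sum_range_succ']
    simp only [Nat.add_sub_add_right, Nat.sub_zero]
    ring

end OnesPattern

theorem stmt3_general (l k : ℕ) (hl : 2 ≤ l) (F : ℕ → ℤ[X])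
    (hF : ∀ n, F n = ∑ w : Fin n → Fin k, (X : ℤ[X]) ^ occOnes l w) :
    ∀ n : ℕ, l ≤ n →
      F n = (C ((k : ℤ) - 1) + X) * F (n - 1) +
        C ((k : ℤ) - 1) * (1 - X) * ∑ d ∈ Finset.Icc 2 (l - 1), F (n - d) := by
  obtain rfl : F = OnesPattern.occPoly l k := funext hF
  intro n hn
  obtain ⟨m, rfl⟩ : ∃ m, n = m + 2 := ⟨n - 2, by omega⟩
  have hsum : ∑ d ∈ Finset.Icc 2 (l - 1), OnesPattern.occPoly l k (m + 2 - d) =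
      ∑ j ∈ Finset.range (l - 2), OnesPattern.occPoly l k (m - j) := by
    have h := Finset.sum_Ico_add' (fun d => OnesPattern.occPoly l k (m + 2 - d)) 0 (l - 2) 2
    rw [zero_add, show l - 2 + 2 = l - 1 + 1 by omega, Finset.Ico_add_one_right_eq_Icc] at h
    simp only [← h, Finset.range_eq_Ico, Nat.add_sub_add_right]
  rw [hsum, show m + 2 - 1 = m + 1 by omega, OnesPattern.occPoly_add_two hl (by omega),
    show l - 1 = l - 2 + 1 by omega,
    OnesPattern.nonconstSuffixPoly_eq_sum (by omega) (by omega)]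
  simp only [map_sub, map_natCast, map_one]
  ring

theorem stmt3 (l k : ℕ) (hl : 2 ≤ l) (hk : 1 ≤ k) (F : ℕ → ℤ[X])
    (hF : ∀ n, F n = ∑ w : Fin n → Fin k, (X : ℤ[X]) ^ occOnes l w) :
    ∀ n : ℕ, l ≤ n →
      F n = (C ((k : ℤ) - 1) + X) * F (n - 1) +
        C ((k : ℤ) - 1) * (1 - X) * ∑ d ∈ Finset.Icc 2 (l - 1), F (n - d) :=
  stmt3_general l k hl F hF
end

section
/- Fix an integer k ≥ 1 and let F(n) = ∑_{w ∈ [k]^n} q^{#12(w)} ∈ ℤ[q] for n ≥ 0, with the convention F(m) = 0 for m < 0 and F(0) = 1. Then for every integer n ≥ 1, F(n) = ∑_{j=1}^{k} C(k, j)·(q - 1)^(j-1)·F(n - j), as an identity of polynomials in q. -/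
open Polynomial

/-- `#12(w)`: the number of indices `i` (0-based, `i+1 < n`) with `w i < w (i+1)`. -/
def occ12 {n k : ℕ} (w : Fin n → Fin k) : ℕ :=
  ((Finset.range n).filter (fun i => i + 1 < n ∧ letter w i < letter w (i + 1))).card

/-! Split off the first letter `a` of a word `a w`: it creates an ascent exactly when `a < w₁`.
Weighting the words of length `n + 1` by `C(w₁ - 1, j)` gives sums `H_j(n)`, and by the
hockey-stick identity `∑_{a < b} C(a - 1, j) = C(b - 1, j + 1)` the first-letter sum gives
`H_j(n + 1) = C(k, j + 1) F(n + 1) + (q - 1) H_{j+1}(n)`, with `H_j(0) = C(k, j + 1)`.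
Unrolling from `F(n + 1) = H_0(n)` yields
`F(n + 1) = ∑_{i=0}^{n} C(k, i + 1) (q - 1)^i F(n - i)`; the terms with `i ≥ k` vanish. -/

open Finset

lemma letter_cons_succ {n k : ℕ} (a : Fin k) (w : Fin n → Fin k) (i : ℕ) :
    letter (Fin.cons a w) (i + 1) = letter w i := by
  by_cases h : i < n
  · simp only [letter, dif_pos h, dif_pos (Nat.succ_lt_succ h)]
    rfl
  · simp [letter, h]

lemma letter_zero {n k : ℕ} (w : Fin (n + 1) → Fin k) : letter w 0 = (w 0 : ℕ) + 1 := by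
  simp [letter]

lemma occ12_cons {n k : ℕ} (a : Fin k) (w : Fin (n + 1) → Fin k) :
    occ12 (Fin.cons a w) = occ12 w + if (a : ℕ) < w 0 then 1 else 0 := by
  simp only [occ12, card_filter]
  rw [sum_range_succ' _ (n + 1)]
  simp only [letter_cons_succ, letter_zero]
  congr 1
  · exact sum_congr rfl fun i _ => by simp only [add_lt_add_iff_right]
  · simp

lemma occ12_of_length_one {k : ℕ} (w : Fin 1 → Fin k) : occ12 w = 0 := by
  simp [occ12]

lemma sum_fun_fin_succ_eq_sum_cons {n : ℕ} {α M : Type*} [Fintype α] [AddCommMonoid M]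
    (f : (Fin (n + 1) → α) → M) :
    ∑ w, f w = ∑ a, ∑ w : Fin n → α, f (Fin.cons a w) := by
  rw [← (Fin.consEquiv fun _ => α).sum_comp f, Fintype.sum_prod_type]
  rfl

lemma sum_range_choose_eq_choose_succ (b j : ℕ) :
    ∑ i ∈ range b, i.choose j = b.choose (j + 1) := by
  induction b with
  | zero => simp
  | succ b ih => rw [sum_range_succ, ih, Nat.choose_succ_succ', add_comm]

section

variable {R : Type*} [CommRing R]

lemma sum_range_ite_lt_mul_choose (q : R) {b k : ℕ} (hbk : b ≤ k) (j : ℕ) :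
    ∑ a ∈ range k, (if a < b then q else 1) * (a.choose j : R)
      = k.choose (j + 1) + (q - 1) * b.choose (j + 1) := by
  induction k, hbk using Nat.le_induction with
  | base =>
    rw [sum_congr rfl fun a ha => by rw [if_pos (mem_range.1 ha)], ← mul_sum, ← Nat.cast_sum,
      sum_range_choose_eq_choose_succ]
    ring
  | succ k hbk ih =>
    rw [sum_range_succ, ih, if_neg (by omega), Nat.choose_succ_succ' k, Nat.cast_add]
    ring

def ascentSum (q : R) (k n : ℕ) : R :=
  ∑ w : Fin n → Fin k, q ^ occ12 w

/-- `(w 0 : ℕ)` is the first letter minus one, since letters are stored 0-based. -/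
def headChooseAscentSum (q : R) (k j n : ℕ) : R :=
  ∑ w : Fin (n + 1) → Fin k, ((w 0 : ℕ).choose j : R) * q ^ occ12 w

lemma ascentSum_zero (q : R) (k : ℕ) : ascentSum q k 0 = 1 := by
  simp [ascentSum, occ12]

lemma headChooseAscentSum_zero (q : R) (k j : ℕ) :
    headChooseAscentSum q k j 0 = k.choose (j + 1) := by
  simp only [headChooseAscentSum, sum_fun_fin_succ_eq_sum_cons, occ12_of_length_one, pow_zero,
    mul_one, Fin.cons_zero, Fintype.sum_unique]
  rw [Fin.sum_univ_eq_sum_range (fun i => (i.choose j : R)), ← Nat.cast_sum,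
    sum_range_choose_eq_choose_succ]

lemma headChooseAscentSum_succ (q : R) (k j n : ℕ) :
    headChooseAscentSum q k j (n + 1)
      = k.choose (j + 1) * ascentSum q k (n + 1)
        + (q - 1) * headChooseAscentSum q k (j + 1) n := by
  rw [headChooseAscentSum, sum_fun_fin_succ_eq_sum_cons, sum_comm]
  calc ∑ w : Fin (n + 1) → Fin k, ∑ a : Fin k,
          (((Fin.cons a w : Fin (n + 2) → Fin k) 0 : ℕ).choose j : R) * q ^ occ12 (Fin.cons a w)
      = ∑ w : Fin (n + 1) → Fin k, q ^ occ12 w *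
          ∑ a ∈ range k, (if a < (w 0 : ℕ) then q else 1) * (a.choose j : R) := by
        refine sum_congr rfl fun w _ => ?_
        rw [← Fin.sum_univ_eq_sum_range
          (fun a => (if a < (w 0 : ℕ) then q else 1) * (a.choose j : R)), mul_sum]
        refine sum_congr rfl fun a _ => ?_
        rw [occ12_cons, Fin.cons_zero, pow_add]
        split_ifs <;> ring
    _ = ∑ w : Fin (n + 1) → Fin k, q ^ occ12 w *
          (k.choose (j + 1) + (q - 1) * (w 0 : ℕ).choose (j + 1)) :=
        sum_congr rfl fun w _ => by rw [sum_range_ite_lt_mul_choose q (w 0).isLt.le]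
    _ = _ := by
        simp only [ascentSum, headChooseAscentSum, mul_add, sum_add_distrib, mul_sum]
        congr 1 <;> exact sum_congr rfl fun w _ => by ring

lemma headChooseAscentSum_eq_sum_range (q : R) (k j n : ℕ) :
    headChooseAscentSum q k j n
      = ∑ i ∈ range (n + 1), k.choose (j + i + 1) * (q - 1) ^ i * ascentSum q k (n - i) := by
  induction n generalizing j with
  | zero => simp [headChooseAscentSum_zero, ascentSum_zero]
  | succ n ih =>
    rw [sum_range_succ', headChooseAscentSum_succ, ih, mul_sum]
    simp only [Nat.add_sub_add_right, add_zero, pow_zero, mul_one, Nat.sub_zero]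
    rw [add_comm]
    congr 1
    exact sum_congr rfl fun i _ => by rw [pow_succ, ← add_assoc]; ring_nf

lemma ascentSum_succ (q : R) (k n : ℕ) :
    ascentSum q k (n + 1)
      = ∑ j ∈ Icc 1 (n + 1), k.choose j * (q - 1) ^ (j - 1) * ascentSum q k (n + 1 - j) := by
  have h : ascentSum q k (n + 1) = headChooseAscentSum q k 0 n := by
    simp [ascentSum, headChooseAscentSum]
  rw [h, headChooseAscentSum_eq_sum_range, range_eq_Ico, ← Ico_add_one_right_eq_Icc,
    ← sum_Ico_add' _ 0 (n + 1) 1]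
  simp only [zero_add, Nat.add_sub_cancel, Nat.add_sub_add_right]

end

theorem stmt4_general (k : ℕ) (F : ℤ → ℤ[X])
    (hFneg : ∀ m : ℤ, m < 0 → F m = 0)
    (hF : ∀ n : ℕ, F (n : ℤ) = ∑ w : Fin n → Fin k, (X : ℤ[X]) ^ occ12 w) :
    ∀ n : ℕ, 1 ≤ n →
      F (n : ℤ) = ∑ j ∈ Finset.Icc 1 k,
        C ((k.choose j : ℤ)) * (X - 1) ^ (j - 1) * F ((n : ℤ) - (j : ℤ)) := by
  intro _ hn
  obtain ⟨n, rfl⟩ := Nat.exists_eq_add_of_le' hn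
  set T : ℕ → ℤ[X] := fun j =>
    C (k.choose j : ℤ) * (X - 1) ^ (j - 1) * F ((n + 1 : ℕ) - j : ℤ)
  calc F (n + 1 : ℕ)
      = ∑ j ∈ Icc 1 (n + 1),
          (k.choose j : ℤ[X]) * (X - 1) ^ (j - 1) * ascentSum X k (n + 1 - j) :=
        (hF _).trans (ascentSum_succ X k n)
    _ = ∑ j ∈ Icc 1 (n + 1), T j := sum_congr rfl fun j hj => by
        simp only [T]
        rw [← Nat.cast_sub (mem_Icc.1 hj).2, hF, C_eq_natCast]
        rfl
    _ = ∑ j ∈ Icc 1 (min (n + 1) k), T j := by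
        refine (sum_subset (Icc_subset_Icc_right (min_le_left _ _)) fun j hj hj' => ?_).symm
        simp only [mem_Icc, le_min_iff] at hj hj'
        simp [T, Nat.choose_eq_zero_of_lt (by omega : k < j)]
    _ = ∑ j ∈ Icc 1 k, T j := by
        refine sum_subset (Icc_subset_Icc_right (min_le_right _ _)) fun j hj hj' => ?_
        simp only [mem_Icc, le_min_iff] at hj hj'
        simp only [T]
        rw [hFneg _ (by omega), mul_zero]

theorem stmt4 (k : ℕ) (hk : 1 ≤ k) (F : ℤ → ℤ[X])
    (hFneg : ∀ m : ℤ, m < 0 → F m = 0)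
    (hF : ∀ n : ℕ, F (n : ℤ) = ∑ w : Fin n → Fin k, (X : ℤ[X]) ^ occ12 w) :
    ∀ n : ℕ, 1 ≤ n →
      F (n : ℤ) = ∑ j ∈ Finset.Icc 1 k,
        C ((k.choose j : ℤ)) * (X - 1) ^ (j - 1) * F ((n : ℤ) - (j : ℤ)) :=
  stmt4_general k F hFneg hF
end

section
/- For all integers n ≥ 0 and k ≥ 0, the number of words in [k]^n avoiding the generalized pattern 21-1 equals the number of words in [k]^n avoiding the generalized pattern 21-2 (i.e., the patterns 21-1 and 21-2 are Wilf-equivalent). -/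
/-- `w` avoids the generalized pattern 21-1: there are no 0-based indices
`i, j` with `i + 2 ≤ j < n` such that `w i > w (i+1)` and `w j = w (i+1)`. -/
def Avoids21d1 {n k : ℕ} (w : Fin n → Fin k) : Prop :=
  ∀ i j : ℕ, i + 2 ≤ j → j < n →
    ¬ (letter w (i + 1) < letter w i ∧ letter w j = letter w (i + 1))

/-- `w` avoids the generalized pattern 21-2: there are no 0-based indices
`i, j` with `i + 2 ≤ j < n` such that `w i > w (i+1)` and `w j = w i`. -/
def Avoids21d2 {n k : ℕ} (w : Fin n → Fin k) : Prop :=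
  ∀ i j : ℕ, i + 2 ≤ j → j < n →
    ¬ (letter w (i + 1) < letter w i ∧ letter w j = letter w i)

/-!
Read a word from left to right. A descent `a > b` forbids one letter for the rest of the word:
the bottom `b` for 21-1, the top `a` for 21-2. In both cases the forbidden letter is still
available and is `≥ b`. Hence the number of admissible continuations depends only on the number
`s` of letters still available and the number `u` of them that are `≥` the last letter read,
and for both patterns it satisfies the same recurrence, that of `wordCount`.
-/

open Finset

theorem card_subtype_ofFn_succ {α : Type*} [Fintype α] (P : List α → Prop) (m : ℕ) :
    Nat.card {w : Fin (m + 1) → α // P (List.ofFn w)} =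
      ∑ b, Nat.card {t : Fin m → α // P (b :: List.ofFn t)} := by
  rw [← Nat.card_sigma]
  exact Nat.card_congr ((Equiv.subtypeEquiv (Fin.consEquiv fun _ => α).symm
    fun w => by rw [List.ofFn_succ]; rfl).trans
    (Equiv.subtypeProdEquivSigmaSubtype fun b t => P (b :: List.ofFn t)))

namespace DescentPattern

variable {α : Type*} [LinearOrder α]

/-- `v a b = b` gives the pattern 21-1, `v a b = a` the pattern 21-2. -/
def HasDescentFollowedBy (v : α → α → α) (l : List α) : Prop :=
  ∃ p q : List α, ∃ a b : α, l = p ++ a :: b :: q ∧ b < a ∧ v a b ∈ q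

variable {v : α → α → α}

theorem HasDescentFollowedBy.two_lt_length {l : List α} (h : HasDescentFollowedBy v l) :
    2 < l.length := by
  obtain ⟨p, q, a, b, rfl, -, hq⟩ := h
  have := List.length_pos_of_mem hq
  simp only [List.length_append, List.length_cons]
  omega

theorem hasDescentFollowedBy_cons_cons {a b : α} {t : List α} :
    HasDescentFollowedBy v (a :: b :: t) ↔
      b < a ∧ v a b ∈ t ∨ HasDescentFollowedBy v (b :: t) := by
  constructor
  · rintro ⟨_ | ⟨c, p⟩, q, x, y, hl, hyx, hv⟩
    · simp only [List.nil_append, List.cons.injEq] at hl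
      obtain ⟨rfl, rfl, rfl⟩ := hl
      exact Or.inl ⟨hyx, hv⟩
    · simp only [List.cons_append, List.cons.injEq] at hl
      exact Or.inr ⟨p, q, x, y, hl.2, hyx, hv⟩
  · rintro (⟨hba, hv⟩ | ⟨p, q, x, y, hl, hyx, hv⟩)
    · exact ⟨[], t, a, b, rfl, hba, hv⟩
    · exact ⟨a :: p, q, x, y, by rw [hl, List.cons_append], hyx, hv⟩

theorem hasDescentFollowedBy_iff_getElem {l : List α} :
    HasDescentFollowedBy v l ↔ ∃ i j : ℕ, ∃ (hi : i + 1 < l.length) (hj : j < l.length),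
      i + 2 ≤ j ∧ l[i + 1] < l[i] ∧ l[j] = v l[i] l[i + 1] := by
  constructor
  · rintro ⟨p, q, a, b, rfl, hba, hq⟩
    obtain ⟨k, hk, hqk⟩ := List.mem_iff_getElem.1 hq
    refine ⟨p.length, p.length + (k + 2), by simp, by simp; omega, by omega, ?_, ?_⟩
    · simpa [List.getElem_append_right] using hba
    · simpa [List.getElem_append_right] using hqk
  · rintro ⟨i, j, hi, hj, hij, hlt, heq⟩
    refine ⟨l.take i, l.drop (i + 2), l[i], l[i + 1], ?_, hlt, ?_⟩
    · rw [← List.drop_eq_getElem_cons, ← List.drop_eq_getElem_cons, List.take_append_drop]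
    · rw [← heq, List.mem_iff_getElem]
      exact ⟨j - (i + 2), by simp; omega, by simp; congr 1; omega⟩

def rank (S : Finset α) (a : α) : ℕ := #{x ∈ S | a ≤ x}

theorem rank_strictAntiOn (S : Finset α) : StrictAntiOn (rank S) S := by
  intro b hb c _ hbc
  refine card_lt_card ⟨monotone_filter_right S fun _ _ h => hbc.le.trans h, fun h => ?_⟩
  exact (lt_irrefl b) (hbc.trans_le (mem_filter.1 (h (mem_filter.2 ⟨hb, le_rfl⟩))).2)

theorem sum_rank (S : Finset α) (F : ℕ → ℕ) :
    ∑ b ∈ S, F (rank S b) = ∑ j ∈ range #S, F (j + 1) := by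
  have himage : S.image (rank S) = (range #S).image (· + 1) := by
    refine eq_of_subset_of_card_le (fun r hr => ?_) ?_
    · obtain ⟨b, hb, rfl⟩ := mem_image.1 hr
      have hpos : 0 < rank S b := card_pos.2 ⟨b, mem_filter.2 ⟨hb, le_rfl⟩⟩
      have hle : rank S b ≤ #S := card_filter_le _ _
      exact mem_image.2 ⟨rank S b - 1, mem_range.2 (by omega), by omega⟩
    · rw [card_image_of_injOn (rank_strictAntiOn S).injOn,
        card_image_of_injective _ (add_left_injective 1), card_range]
  rw [← sum_image (rank_strictAntiOn S).injOn, himage,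
    sum_image fun _ _ _ _ h => add_right_cancel h]

theorem rank_erase {S : Finset α} {x b : α} (hx : x ∈ S) (hbx : b ≤ x) :
    rank (S.erase x) b = rank S b - 1 := by
  rw [rank, filter_erase, card_erase_of_mem (mem_filter.2 ⟨hx, hbx⟩), rank]

theorem rank_filter_le_of_le (S : Finset α) {a b : α} (hab : a ≤ b) :
    rank {x ∈ S | a ≤ x} b = rank S b := by
  rw [rank, rank, filter_filter]
  exact congrArg card (filter_congr fun x _ => ⟨And.right, fun h => ⟨hab.trans h, h⟩⟩)

theorem rank_eq_rank_add_rank_filter_lt (S : Finset α) {a b : α} (hba : b < a) :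
    rank S b = rank S a + rank {x ∈ S | x < a} b := by
  rw [rank, ← card_filter_add_card_filter_not (fun x => a ≤ x), filter_filter, filter_filter,
    rank, rank, filter_filter]
  congr 2 <;> ext x <;> simp only [mem_filter, not_le]
  · exact ⟨fun h => ⟨h.1, h.2.2⟩, fun h => ⟨h.1, hba.le.trans h.2, h.2⟩⟩
  · exact ⟨fun h => ⟨h.1, h.2.2, h.2.1⟩, fun h => ⟨h.1, h.2.2, h.2.1⟩⟩

/-- `wordCount m s u` counts the continuations of length `m` when `s` letters are available and
`u` of them are `≥` the last letter: the next letter is either one of these `u`, or one of the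
`s - u` smaller ones, which creates a descent and removes one available letter. -/
def wordCount : ℕ → ℕ → ℕ → ℕ
  | 0, _, _ => 1
  | m + 1, s, u =>
      ∑ j ∈ range u, wordCount m s (j + 1) + ∑ j ∈ range (s - u), wordCount m (s - 1) (u + j)

theorem sum_wordCount_step (S : Finset α) (a : α) (m : ℕ) :
    ∑ b ∈ S, (if b < a then wordCount m (#S - 1) (rank S b - 1) else wordCount m #S (rank S b)) =
      wordCount (m + 1) #S (rank S a) := by
  set U := {x ∈ S | a ≤ x}
  set L := {x ∈ S | x < a}
  have hUL : #U + #L = #S := by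
    simpa only [not_le] using card_filter_add_card_filter_not (s := S) (fun x => a ≤ x)
  have hU : ∑ b ∈ U, (if b < a then wordCount m (#S - 1) (rank S b - 1)
      else wordCount m #S (rank S b)) = ∑ j ∈ range #U, wordCount m #S (j + 1) := by
    rw [← sum_rank U]
    refine sum_congr rfl fun b hb => ?_
    have hab := (mem_filter.1 hb).2
    rw [if_neg hab.not_gt, rank_filter_le_of_le S hab]
  have hL : ∑ b ∈ L, (if b < a then wordCount m (#S - 1) (rank S b - 1)
      else wordCount m #S (rank S b)) = ∑ j ∈ range #L, wordCount m (#S - 1) (#U + j) := by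
    refine (sum_congr rfl fun b hb => ?_).trans
      (sum_rank L fun j => wordCount m (#S - 1) (#U + j - 1))
    have hba := (mem_filter.1 hb).2
    rw [if_pos hba, rank_eq_rank_add_rank_filter_lt S hba]
    rfl
  rw [← sum_filter_add_sum_filter_not S (fun b => a ≤ b)]
  simp only [not_le]
  rw [hU, hL, wordCount, show #L = #S - #U by omega]
  rfl

def survivors (v : α → α → α) (S : Finset α) (a b : α) : Finset α :=
  if b < a then S.erase (v a b) else S

def Admissible (v : α → α → α) (S : Finset α) (a : α) (l : List α) : Prop :=
  (∀ x ∈ l, x ∈ S) ∧ ¬ HasDescentFollowedBy v (a :: l)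

theorem admissible_cons_iff {S : Finset α} {a b : α} {t : List α} :
    Admissible v S a (b :: t) ↔ b ∈ S ∧ Admissible v (survivors v S a b) b t := by
  rw [Admissible, Admissible, hasDescentFollowedBy_cons_cons, survivors]
  split_ifs with hba
  · simp only [List.forall_mem_cons, mem_erase, hba, true_and, not_or]
    constructor
    · rintro ⟨⟨hb, ht⟩, hv, hd⟩
      exact ⟨hb, fun x hx => ⟨fun h => hv (h ▸ hx), ht x hx⟩, hd⟩
    · rintro ⟨hb, ht, hd⟩
      exact ⟨⟨hb, fun x hx => (ht x hx).2⟩, fun hv => (ht _ hv).1 rfl, hd⟩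
  · simp only [List.forall_mem_cons, hba, false_and, false_or, and_assoc]

variable [Fintype α]

noncomputable def avoidCount (v : α → α → α) (S : Finset α) (a : α) (m : ℕ) : ℕ :=
  Nat.card {w : Fin m → α // Admissible v S a (List.ofFn w)}

theorem avoidCount_zero (v : α → α → α) (S : Finset α) (a : α) : avoidCount v S a 0 = 1 := by
  have : ¬ HasDescentFollowedBy v [a] := fun h => by simpa using h.two_lt_length
  simp [avoidCount, Admissible, this]

theorem avoidCount_succ (v : α → α → α) (S : Finset α) (a : α) (m : ℕ) :
    avoidCount v S a (m + 1) = ∑ b ∈ S, avoidCount v (survivors v S a b) b m := by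
  rw [avoidCount, card_subtype_ofFn_succ (Admissible v S a), ← Fintype.sum_ite_mem S]
  refine sum_congr rfl fun b _ => ?_
  simp_rw [admissible_cons_iff]
  split_ifs with hb
  · simp only [hb, true_and]
    rfl
  · simp [hb]

theorem avoidCount_succ_eq_wordCount {S : Finset α} {a : α} {m : ℕ}
    (hv : ∀ b ∈ S, b < a → v a b ∈ S ∧ b ≤ v a b)
    (ih : ∀ b ∈ S, avoidCount v (survivors v S a b) b m =
      wordCount m #(survivors v S a b) (rank (survivors v S a b) b)) :
    avoidCount v S a (m + 1) = wordCount (m + 1) #S (rank S a) := by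
  rw [avoidCount_succ, ← sum_wordCount_step]
  refine sum_congr rfl fun b hb => ?_
  rw [ih b hb, survivors]
  split_ifs with hba
  · obtain ⟨hmem, hle⟩ := hv b hb hba
    rw [card_erase_of_mem hmem, rank_erase hmem hle]
  · rfl

theorem avoidCount_bottom_eq_wordCount (m : ℕ) (S : Finset α) (a : α) :
    avoidCount (fun _ b => b) S a m = wordCount m #S (rank S a) := by
  induction m generalizing S a with
  | zero => rw [avoidCount_zero, wordCount]
  | succ m ih =>
    exact avoidCount_succ_eq_wordCount (fun b hb _ => ⟨hb, le_rfl⟩) fun b _ => ih _ _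

theorem avoidCount_top_eq_wordCount (m : ℕ) (S : Finset α) (a : α) (ha : a ∈ S) :
    avoidCount (fun a _ => a) S a m = wordCount m #S (rank S a) := by
  induction m generalizing S a with
  | zero => rw [avoidCount_zero, wordCount]
  | succ m ih =>
    refine avoidCount_succ_eq_wordCount (fun b _ hba => ⟨ha, hba.le⟩) fun b hb => ih _ _ ?_
    rw [survivors]
    split_ifs with hba
    · exact mem_erase.2 ⟨hba.ne, hb⟩
    · exact hb

theorem card_not_hasDescentFollowedBy_bottom_eq_top (n : ℕ) :
    Nat.card {w : Fin n → α // ¬ HasDescentFollowedBy (fun _ b => b) (List.ofFn w)} =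
      Nat.card {w : Fin n → α // ¬ HasDescentFollowedBy (fun a _ => a) (List.ofFn w)} := by
  cases n with
  | zero =>
    have (v : α → α → α) : ¬ HasDescentFollowedBy v [] := fun h => by simpa using h.two_lt_length
    simp [this]
  | succ m =>
    have hcount (v : α → α → α) (b : α) : Nat.card {t : Fin m → α //
        ¬ HasDescentFollowedBy v (b :: List.ofFn t)} = avoidCount v univ b m :=
      Nat.card_congr (Equiv.subtypeEquivRight fun t => by simp [Admissible])
    rw [card_subtype_ofFn_succ (fun l => ¬ HasDescentFollowedBy _ l),
      card_subtype_ofFn_succ (fun l => ¬ HasDescentFollowedBy _ l)]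
    refine sum_congr rfl fun b _ => ?_
    rw [hcount, hcount, avoidCount_bottom_eq_wordCount,
      avoidCount_top_eq_wordCount _ _ _ (mem_univ b)]

end DescentPattern

theorem letter_lt_letter_iff {n k i j : ℕ} (w : Fin n → Fin k) (hi : i < n) (hj : j < n) :
    letter w i < letter w j ↔ w ⟨i, hi⟩ < w ⟨j, hj⟩ := by
  simp [letter, hi, hj]

theorem letter_eq_letter_iff {n k i j : ℕ} (w : Fin n → Fin k) (hi : i < n) (hj : j < n) :
    letter w i = letter w j ↔ w ⟨i, hi⟩ = w ⟨j, hj⟩ := by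
  simp [letter, hi, hj, Fin.ext_iff]

open DescentPattern

theorem avoids21d1_iff {n k : ℕ} (w : Fin n → Fin k) :
    Avoids21d1 w ↔ ¬ HasDescentFollowedBy (fun _ b => b) (List.ofFn w) := by
  simp only [Avoids21d1, hasDescentFollowedBy_iff_getElem, List.length_ofFn, List.getElem_ofFn,
    not_exists, not_and]
  refine forall₂_congr fun i j => ⟨fun h hi hj hij => ?_, fun h hij hj => ?_⟩
  · rw [← letter_lt_letter_iff, ← letter_eq_letter_iff]
    exact h hij hj
  · have hi : i + 1 < n := by omega
    rw [letter_lt_letter_iff w hi (by omega), letter_eq_letter_iff w hj hi]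
    exact h hi hj hij

theorem avoids21d2_iff {n k : ℕ} (w : Fin n → Fin k) :
    Avoids21d2 w ↔ ¬ HasDescentFollowedBy (fun a _ => a) (List.ofFn w) := by
  simp only [Avoids21d2, hasDescentFollowedBy_iff_getElem, List.length_ofFn, List.getElem_ofFn,
    not_exists, not_and]
  refine forall₂_congr fun i j => ⟨fun h hi hj hij => ?_, fun h hij hj => ?_⟩
  · rw [← letter_lt_letter_iff, ← letter_eq_letter_iff]
    exact h hij hj
  · have hi : i + 1 < n := by omega
    rw [letter_lt_letter_iff w hi (by omega), letter_eq_letter_iff w hj (by omega)]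
    exact h hi hj hij

theorem stmt7 (n k : ℕ) :
    Nat.card {w : Fin n → Fin k // Avoids21d1 w} =
      Nat.card {w : Fin n → Fin k // Avoids21d2 w} := by
  rw [Nat.card_congr (Equiv.subtypeEquivRight avoids21d1_iff),
    Nat.card_congr (Equiv.subtypeEquivRight avoids21d2_iff)]
  exact card_not_hasDescentFollowedBy_bottom_eq_top n
end

section
/- For all integers n ≥ 0 and k ≥ 0, the number of words in [k]^n avoiding the generalized pattern 12-3 equals the number of words in [k]^n avoiding the generalized pattern 21-3 (i.e., the patterns 12-3 and 21-3 are Wilf-equivalent). -/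
def Avoids12d3 {n k : ℕ} (w : Fin n → Fin k) : Prop :=
  ∀ i j : ℕ, i + 2 ≤ j → j < n →
    ¬ (letter w i < letter w (i + 1) ∧ letter w (i + 1) < letter w j)

def Avoids21d3 {n k : ℕ} (w : Fin n → Fin k) : Prop :=
  ∀ i j : ℕ, i + 2 ≤ j → j < n →
    ¬ (letter w (i + 1) < letter w i ∧ letter w i < letter w j)

/-!
Call a position of a word a suffix maximum if its letter is at least every later letter.
The other positions fall into maximal runs (gaps), and every letter in a gap is smaller than
the suffix maximum closing it. Hence an occurrence of 12-3 is exactly an ascent inside a gap,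
and an occurrence of 21-3 exactly a descent inside a gap. Reversing the word inside each gap
keeps the suffix maxima, so it is an involution of `[k]^n` exchanging the two classes.
-/

open Set

/-- `[a, b)` is a maximal interval disjoint from `S`; `pred_mem` says `a = 0 ∨ a - 1 ∈ S`. -/
structure IsGap (S : Set ℕ) (a b : ℕ) : Prop where
  pred_mem : ∀ i, i + 1 = a → i ∈ S
  right_mem : b ∈ S
  notMem : ∀ i ∈ Ico a b, i ∉ S

section GapReflect

variable {S : Set ℕ} {a b q : ℕ}

theorem IsGap.eq_of_mem_Ico {a' b' : ℕ} (h : IsGap S a b) (h' : IsGap S a' b')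
    (hq : q ∈ Ico a b) (hq' : q ∈ Ico a' b') : a = a' ∧ b = b' := by
  obtain ⟨ha, hb⟩ := hq
  obtain ⟨ha', hb'⟩ := hq'
  constructor
  · rcases lt_trichotomy a a' with hlt | heq | hlt
    · exact absurd (h'.pred_mem (a' - 1) (by omega)) (h.notMem _ ⟨by omega, by omega⟩)
    · exact heq
    · exact absurd (h.pred_mem (a - 1) (by omega)) (h'.notMem _ ⟨by omega, by omega⟩)
  · rcases lt_trichotomy b b' with hlt | heq | hlt
    · exact absurd h.right_mem (h'.notMem b ⟨by omega, hlt⟩)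
    · exact heq
    · exact absurd h'.right_mem (h.notMem b' ⟨by omega, hlt⟩)

theorem exists_isGap (hS : S.Infinite) (hq : q ∉ S) : ∃ a b, IsGap S a b ∧ q ∈ Ico a b := by
  classical
  have hb : ∃ b, q < b ∧ b ∈ S := by
    obtain ⟨b, hbS, hqb⟩ := hS.exists_gt q
    exact ⟨b, hqb, hbS⟩
  have ha : ∃ a, ∀ i, a ≤ i → i ≤ q → i ∉ S := ⟨q + 1, fun i h1 h2 => by omega⟩
  refine ⟨Nat.find ha, Nat.find hb, ⟨fun i hi => ?_, (Nat.find_spec hb).2, fun i hi => ?_⟩,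
    Nat.find_min' ha fun i h1 h2 => (show i = q by omega) ▸ hq, (Nat.find_spec hb).1⟩
  · obtain ⟨l, hil, hlq, hl⟩ : ∃ l, i ≤ l ∧ l ≤ q ∧ l ∈ S := by
      simpa using Nat.find_min ha (show i < Nat.find ha by omega)
    obtain rfl | hlt := hil.eq_or_lt
    · exact hl
    · exact absurd hl (Nat.find_spec ha l (by omega) hlq)
  · by_cases hiq : i ≤ q
    · exact Nat.find_spec ha i hi.1 hiq
    · exact fun hiS => Nat.find_min hb hi.2 ⟨by omega, hiS⟩

open Classical in
noncomputable def gapReflect (S : Set ℕ) (q : ℕ) : ℕ :=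
  if h : ∃ a b, IsGap S a b ∧ q ∈ Ico a b then h.choose + h.choose_spec.choose - 1 - q else q

theorem gapReflect_eq (h : IsGap S a b) (hq : q ∈ Ico a b) :
    gapReflect S q = a + b - 1 - q := by
  have hex : ∃ a b, IsGap S a b ∧ q ∈ Ico a b := ⟨a, b, h, hq⟩
  obtain ⟨h', hq'⟩ := hex.choose_spec.choose_spec
  obtain ⟨ha, hb⟩ := h.eq_of_mem_Ico h' hq hq'
  rw [gapReflect, dif_pos hex]
  omega

theorem gapReflect_mem_Ico (h : IsGap S a b) (hq : q ∈ Ico a b) : gapReflect S q ∈ Ico a b := by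
  rw [gapReflect_eq h hq]
  obtain ⟨ha, hb⟩ := hq
  exact ⟨by omega, by omega⟩

theorem gapReflect_of_not_exists (h : ¬∃ a b, IsGap S a b ∧ q ∈ Ico a b) :
    gapReflect S q = q :=
  dif_neg h

theorem gapReflect_of_mem (hq : q ∈ S) : gapReflect S q = q :=
  gapReflect_of_not_exists fun ⟨_, _, h, hq'⟩ => h.notMem q hq' hq

theorem gapReflect_involutive : Function.Involutive (gapReflect S) := by
  intro q
  by_cases hex : ∃ a b, IsGap S a b ∧ q ∈ Ico a b
  · obtain ⟨a, b, h, hq⟩ := hex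
    rw [gapReflect_eq h (gapReflect_mem_Ico h hq), gapReflect_eq h hq]
    obtain ⟨ha, hb⟩ := hq
    omega
  · rw [gapReflect_of_not_exists hex, gapReflect_of_not_exists hex]

theorem gapReflect_mem_iff : gapReflect S q ∈ S ↔ q ∈ S := by
  by_cases hex : ∃ a b, IsGap S a b ∧ q ∈ Ico a b
  · obtain ⟨a, b, h, hq⟩ := hex
    exact iff_of_false (h.notMem _ (gapReflect_mem_Ico h hq)) (h.notMem q hq)
  · rw [gapReflect_of_not_exists hex]

theorem gapReflect_lt {n : ℕ} (hn : n ∈ S) (hq : q < n) : gapReflect S q < n := by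
  by_cases hex : ∃ a b, IsGap S a b ∧ q ∈ Ico a b
  · obtain ⟨a, b, h, hqab⟩ := hex
    have hbn : b ≤ n := not_lt.1 fun hnb => h.notMem n ⟨by have := hqab.1; omega, hnb⟩ hn
    have := (gapReflect_mem_Ico h hqab).2
    omega
  · rwa [gapReflect_of_not_exists hex]

theorem gapReflect_eq_gapReflect_succ_add_one (hS : S.Infinite) {i : ℕ} (hi : i ∉ S)
    (hi' : i + 1 ∉ S) : gapReflect S i = gapReflect S (i + 1) + 1 := by
  obtain ⟨a, b, h, hiab⟩ := exists_isGap hS hi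
  have hb : i + 1 ≠ b := fun e => hi' (e ▸ h.right_mem)
  obtain ⟨ha, hib⟩ := hiab
  rw [gapReflect_eq h ⟨ha, hib⟩, gapReflect_eq h ⟨by omega, by omega⟩]
  omega

variable {α : Type*}

def AntitoneOnGaps [LE α] (S : Set ℕ) (f : ℕ → α) : Prop :=
  ∀ i, i ∉ S → i + 1 ∉ S → f (i + 1) ≤ f i

def MonotoneOnGaps [LE α] (S : Set ℕ) (f : ℕ → α) : Prop :=
  ∀ i, i ∉ S → i + 1 ∉ S → f i ≤ f (i + 1)

theorem antitoneOnGaps_iff_monotoneOnGaps_comp_gapReflect [LE α] (hS : S.Infinite)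
    (f : ℕ → α) : AntitoneOnGaps S f ↔ MonotoneOnGaps S (f ∘ gapReflect S) := by
  constructor
  · intro hf i hi hi'
    have e := gapReflect_eq_gapReflect_succ_add_one hS hi hi'
    simp only [Function.comp_apply, e]
    exact hf _ (gapReflect_mem_iff.not.2 hi') (e ▸ gapReflect_mem_iff.not.2 hi)
  · intro hf i hi hi'
    have e := gapReflect_eq_gapReflect_succ_add_one hS hi hi'
    have := hf (gapReflect S (i + 1)) (gapReflect_mem_iff.not.2 hi')
      (e ▸ gapReflect_mem_iff.not.2 hi)
    rwa [Function.comp_apply, Function.comp_apply, ← e, gapReflect_involutive,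
      gapReflect_involutive] at this

end GapReflect

section SuffixMaxima

variable {α : Type*} [LinearOrder α] {f : ℕ → α} {a b : ℕ}

def suffixMaxima (f : ℕ → α) : Set ℕ := {p | ∀ j, p < j → f j ≤ f p}

theorem IsGap.le_right (hg : IsGap (suffixMaxima f) a b) {j : ℕ} (hj : a ≤ j) : f j ≤ f b := by
  by_cases hbj : b ≤ j
  · obtain rfl | hlt := hbj.eq_or_lt
    · exact le_rfl
    · exact hg.right_mem j hlt
  · -- a maximizer of `f` on `[a, b]` is a suffix maximum, so it can only be `b`
    obtain ⟨m, hm, hmax⟩ := (Finset.Icc a b).exists_max_image f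
      ⟨b, Finset.mem_Icc.2 ⟨by omega, le_rfl⟩⟩
    rw [Finset.mem_Icc] at hm
    have hmS : m ∈ suffixMaxima f := fun l hl => by
      by_cases hlb : l ≤ b
      · exact hmax l (Finset.mem_Icc.2 ⟨by omega, hlb⟩)
      · exact (hg.right_mem l (by omega)).trans (hmax b (Finset.mem_Icc.2 ⟨by omega, le_rfl⟩))
    have hmb : m = b := by
      by_contra hne
      exact hg.notMem m ⟨hm.1, by omega⟩ hmS
    exact hmb ▸ hmax j (Finset.mem_Icc.2 ⟨hj, by omega⟩)

theorem IsGap.lt_right (hg : IsGap (suffixMaxima f) a b) {q : ℕ} (hq : q ∈ Ico a b) :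
    f q < f b := by
  obtain ⟨j, hqj, hlt⟩ : ∃ j, q < j ∧ f q < f j := by
    simpa [suffixMaxima] using hg.notMem q hq
  exact hlt.trans_le (hg.le_right (by have := hq.1; omega))

theorem suffixMaxima_comp_gapReflect (hS : (suffixMaxima f).Infinite) :
    suffixMaxima (f ∘ gapReflect (suffixMaxima f)) = suffixMaxima f := by
  ext p
  constructor
  · intro hp
    by_contra hpS
    obtain ⟨a, b, hg, hpab⟩ := exists_isGap hS hpS
    have := hp b hpab.2
    rw [Function.comp_apply, Function.comp_apply, gapReflect_of_mem hg.right_mem] at this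
    exact (hg.lt_right (gapReflect_mem_Ico hg hpab)).not_ge this
  · intro hp j hpj
    rw [Function.comp_apply, Function.comp_apply, gapReflect_of_mem hp]
    by_cases hj : j ∈ suffixMaxima f
    · rw [gapReflect_of_mem hj]
      exact hp j hpj
    · obtain ⟨a, b, hg, hjab⟩ := exists_isGap hS hj
      have hpa : p < a := not_le.1 fun hap => hg.notMem p ⟨hap, by have := hjab.2; omega⟩ hp
      exact hp _ (hpa.trans_le (gapReflect_mem_Ico hg hjab).1)

end SuffixMaxima

section Words

variable {n k : ℕ}

theorem letter_of_le (w : Fin n → Fin k) {i : ℕ} (hi : n ≤ i) : letter w i = 0 :=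
  dif_neg (not_lt.2 hi)

theorem lt_of_lt_letter {w : Fin n → Fin k} {m i : ℕ} (h : m < letter w i) : i < n :=
  not_le.1 fun hi => by rw [letter_of_le w hi] at h; omega

theorem mem_suffixMaxima_letter (w : Fin n → Fin k) {i : ℕ} (hi : n ≤ i) :
    i ∈ suffixMaxima (letter w) := fun j hj => by
  rw [letter_of_le w (by omega : n ≤ j)]
  exact Nat.zero_le _

theorem suffixMaxima_letter_infinite (w : Fin n → Fin k) : (suffixMaxima (letter w)).Infinite :=
  (Ici_infinite n).mono fun _ hi => mem_suffixMaxima_letter w hi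

theorem letter_injective : Function.Injective (letter : (Fin n → Fin k) → ℕ → ℕ) := by
  intro w v h
  funext q
  have := congrFun h q
  simp only [letter, dif_pos q.2, Nat.add_right_cancel_iff] at this
  exact Fin.ext this

theorem avoids12d3_iff_antitoneOnGaps (w : Fin n → Fin k) :
    Avoids12d3 w ↔ AntitoneOnGaps (suffixMaxima (letter w)) (letter w) := by
  constructor
  · intro hw i _ hi'
    obtain ⟨j, hij, hlt⟩ : ∃ j, i + 1 < j ∧ letter w (i + 1) < letter w j := by
      simpa [suffixMaxima] using hi'
    exact not_lt.1 fun h => hw i j hij (lt_of_lt_letter hlt) ⟨h, hlt⟩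
  · rintro hw i j hij - ⟨h1, h2⟩
    have hi : i ∉ suffixMaxima (letter w) := fun hs => (hs (i + 1) (by omega)).not_gt h1
    have hi' : i + 1 ∉ suffixMaxima (letter w) := fun hs => (hs j (by omega)).not_gt h2
    exact (hw i hi hi').not_gt h1

theorem avoids21d3_iff_monotoneOnGaps (w : Fin n → Fin k) :
    Avoids21d3 w ↔ MonotoneOnGaps (suffixMaxima (letter w)) (letter w) := by
  constructor
  · intro hw i hi _
    obtain ⟨j, hij, hlt⟩ : ∃ j, i < j ∧ letter w i < letter w j := by
      simpa [suffixMaxima] using hi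
    refine not_lt.1 fun h => ?_
    have hj : i + 2 ≤ j := by
      by_contra
      obtain rfl : j = i + 1 := by omega
      exact lt_asymm h hlt
    exact hw i j hj (lt_of_lt_letter hlt) ⟨h, hlt⟩
  · rintro hw i j hij - ⟨h1, h2⟩
    have hi : i ∉ suffixMaxima (letter w) := fun hs => (hs j (by omega)).not_gt h2
    have hi' : i + 1 ∉ suffixMaxima (letter w) := fun hs => (hs j (by omega)).not_gt (h1.trans h2)
    exact (hw i hi hi').not_gt h1

noncomputable def reverseGaps (w : Fin n → Fin k) : Fin n → Fin k := fun q =>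
  w ⟨gapReflect (suffixMaxima (letter w)) q, gapReflect_lt (mem_suffixMaxima_letter w le_rfl) q.2⟩

theorem letter_reverseGaps (w : Fin n → Fin k) :
    letter (reverseGaps w) = letter w ∘ gapReflect (suffixMaxima (letter w)) := by
  funext i
  by_cases hi : i < n
  · simp only [letter, dif_pos hi, Function.comp_apply, reverseGaps,
      dif_pos (gapReflect_lt (mem_suffixMaxima_letter w le_rfl) hi)]
  · rw [Function.comp_apply, gapReflect_of_mem (mem_suffixMaxima_letter w (not_lt.1 hi)),
      letter_of_le _ (not_lt.1 hi), letter_of_le _ (not_lt.1 hi)]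

theorem suffixMaxima_letter_reverseGaps (w : Fin n → Fin k) :
    suffixMaxima (letter (reverseGaps w)) = suffixMaxima (letter w) := by
  rw [letter_reverseGaps]
  exact suffixMaxima_comp_gapReflect (suffixMaxima_letter_infinite w)

theorem reverseGaps_involutive : Function.Involutive (reverseGaps : (Fin n → Fin k) → _) :=
  fun w => letter_injective <| by
    rw [letter_reverseGaps, suffixMaxima_letter_reverseGaps, letter_reverseGaps,
      Function.comp_assoc, gapReflect_involutive.comp_self, Function.comp_id]

theorem avoids12d3_iff_avoids21d3_reverseGaps (w : Fin n → Fin k) :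
    Avoids12d3 w ↔ Avoids21d3 (reverseGaps w) := by
  rw [avoids12d3_iff_antitoneOnGaps, avoids21d3_iff_monotoneOnGaps,
    suffixMaxima_letter_reverseGaps, letter_reverseGaps]
  exact antitoneOnGaps_iff_monotoneOnGaps_comp_gapReflect (suffixMaxima_letter_infinite w) _

end Words

theorem stmt9 (n k : ℕ) :
    Nat.card {w : Fin n → Fin k // Avoids12d3 w} =
      Nat.card {w : Fin n → Fin k // Avoids21d3 w} :=
  Nat.card_congr <| Equiv.subtypeEquiv (Function.Involutive.toPerm _ reverseGaps_involutive)
    avoids12d3_iff_avoids21d3_reverseGaps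
end

section
/- For integers n ≥ 0, k ≥ 1 and 1 ≤ j ≤ k, let a_{n,k}(j) denote the number of words in [k]^n avoiding the generalized pattern 13-2 whose first letter equals j, with the convention a_{n,k}(i) = 0 whenever i > k. Then for all n ≥ 2, k ≥ 1 and 1 ≤ j ≤ k, a_{n,k}(j) = ∑_{i=1}^{j+1} a_{n-1,k}(i) + ∑_{i=j+1}^{k-1} a_{n-1,i}(j+1). -/
/-- `w` avoids the generalized pattern 13-2: there are no 0-based indices
`i, j` with `i + 2 ≤ j < n` such that `w i < w j < w (i+1)`. -/
def Avoids13d2 {n k : ℕ} (w : Fin n → Fin k) : Prop :=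
  ∀ i j : ℕ, i + 2 ≤ j → j < n →
    ¬ (letter w i < letter w j ∧ letter w j < letter w (i + 1))

/-- `a n k j`: the number of words in `[k]^n` avoiding 13-2 whose first
letter equals `j` (letters take values in `{1,…,k}`, so this is `0` for `j > k`). -/
noncomputable def a (n k j : ℕ) : ℕ :=
  Nat.card {w : Fin n → Fin k // Avoids13d2 w ∧ letter w 0 = j}

lemma letter_tail {t k : ℕ} (w : Fin (t+1) → Fin k) (q : ℕ) :
    letter (Fin.tail w) q = letter w (q+1) := by
  unfold letter
  rcases lt_or_ge q t with h | h
  · rw [dif_pos h, dif_pos (by omega : q+1 < t+1)]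
    rfl
  · rw [dif_neg (by omega), dif_neg (by omega)]

lemma letter_lt {n k : ℕ} (w : Fin n → Fin k) {q : ℕ} (h : q < n) :
    letter w q = (w ⟨q, h⟩ : ℕ) + 1 := by
  unfold letter; rw [dif_pos h]

lemma letter_ge {n k : ℕ} (w : Fin n → Fin k) {q : ℕ} (h : ¬ q < n) :
    letter w q = 0 := by
  unfold letter; rw [dif_neg h]

lemma avoids_cons_iff {t k : ℕ} (w : Fin (t+1) → Fin k) :
    Avoids13d2 w ↔ Avoids13d2 (Fin.tail w) ∧
      ∀ q, 2 ≤ q → ¬ (letter w 0 < letter w q ∧ letter w q < letter w 1) := by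
  constructor
  · intro hw
    refine ⟨?_, ?_⟩
    · intro i j hij hj
      rw [letter_tail, letter_tail, letter_tail]
      exact hw (i+1) (j+1) (by omega) (by omega)
    · intro q hq
      rcases lt_or_ge q (t+1) with h | h
      · exact hw 0 q hq h
      · rw [letter_ge w (show ¬ q < t+1 by omega)]
        omega
  · rintro ⟨h1, h2⟩ i j hij hj
    rcases Nat.eq_zero_or_pos i with rfl | hi
    · exact h2 j hij
    · obtain ⟨i', rfl⟩ : ∃ i', i = i' + 1 := ⟨i-1, by omega⟩
      obtain ⟨j', rfl⟩ : ∃ j', j = j' + 1 := ⟨j-1, by omega⟩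
      have := h1 i' j' (by omega) (by omega)
      rw [letter_tail, letter_tail, letter_tail] at this
      exact this

def gmap (j d v : ℕ) : ℕ := if v = 0 then 0 else if v ≤ j then v else v + d

lemma gmap_lt_iff (j d v v' : ℕ) : gmap j d v < gmap j d v' ↔ v < v' := by
  unfold gmap; split_ifs <;> omega

lemma gmap_inj {j d v v' : ℕ} (h : gmap j d v = gmap j d v') : v = v' := by
  have h1 := gmap_lt_iff j d v v'
  have h2 := gmap_lt_iff j d v' v
  omega

def psi (k j i : ℕ) (hji : j + 2 ≤ i) (hik : i ≤ k) (c : Fin (k - i + j + 1)) : Fin k :=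
  ⟨if (c : ℕ) < j then (c : ℕ) else (c : ℕ) + (i - j - 1), by
    have := c.isLt; split_ifs <;> omega⟩

lemma letter_psi_comp {t k j i : ℕ} (hji : j + 2 ≤ i) (hik : i ≤ k)
    (w : Fin t → Fin (k - i + j + 1)) (q : ℕ) :
    letter (fun p => psi k j i hji hik (w p)) q = gmap j (i - j - 1) (letter w q) := by
  by_cases h : q < t
  · rw [letter_lt _ h, letter_lt _ h]
    show (psi k j i hji hik (w ⟨q, h⟩) : ℕ) + 1 = gmap j (i - j - 1) ((w ⟨q, h⟩ : ℕ) + 1)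
    simp only [psi, gmap]
    split_ifs <;> first | exact absurd rfl (by assumption) | (try exact (‹False›).elim) <;> omega
  · rw [letter_ge _ h, letter_ge _ h]; simp [gmap]

lemma avoids_psi_iff {t k j i : ℕ} (hji : j + 2 ≤ i) (hik : i ≤ k)
    (w : Fin t → Fin (k - i + j + 1)) :
    Avoids13d2 (fun p => psi k j i hji hik (w p)) ↔ Avoids13d2 w := by
  unfold Avoids13d2
  constructor <;> intro h p q h1 h2 <;> have := h p q h1 h2 <;>
    simp only [letter_psi_comp, gmap_lt_iff] at this ⊢ <;> exact this

noncomputable def cnt2 (n k j i : ℕ) : ℕ :=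
  Nat.card {w : Fin n → Fin k // Avoids13d2 w ∧ letter w 0 = j ∧ letter w 1 = i}

lemma cnt2_eq (t k j i : ℕ) (hj : 1 ≤ j) (hjk : j ≤ k) :
    cnt2 (t+1) k j i = Nat.card {w : Fin t → Fin k // Avoids13d2 w ∧ letter w 0 = i ∧
      ∀ q, 1 ≤ q → ¬ (j < letter w q ∧ letter w q < i)} := by
  apply Nat.card_congr
  refine ⟨fun w => ⟨Fin.tail w.1, ?_, ?_, ?_⟩,
          fun w => ⟨Fin.cons ⟨j-1, by omega⟩ w.1, ?_, ?_, ?_⟩, ?_, ?_⟩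
  · exact ((avoids_cons_iff w.1).mp w.2.1).1
  · rw [letter_tail]; exact w.2.2.2
  · intro q hq
    rw [letter_tail]
    have := ((avoids_cons_iff w.1).mp w.2.1).2 (q+1) (by omega)
    rw [w.2.2.1, w.2.2.2] at this
    exact this
  · rw [avoids_cons_iff]
    refine ⟨by rw [Fin.tail_cons]; exact w.2.1, ?_⟩
    intro q hq
    obtain ⟨q', rfl⟩ : ∃ q', q = q' + 1 := ⟨q-1, by omega⟩
    have h0 : letter (Fin.cons (⟨j-1, by omega⟩ : Fin k) w.1) 0 = j := by
      rw [letter_lt _ (Nat.succ_pos t)]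
      show ((⟨j-1, by omega⟩ : Fin k) : ℕ) + 1 = j
      simp; omega
    have hq' : letter (Fin.cons (⟨j-1, by omega⟩ : Fin k) w.1) (q'+1) = letter w.1 q' := by
      rw [← letter_tail, Fin.tail_cons]
    have h1 : letter (Fin.cons (⟨j-1, by omega⟩ : Fin k) w.1) 1 = i := by
      rw [← letter_tail, Fin.tail_cons]
      exact w.2.2.1
    rw [h0, hq', h1]
    exact w.2.2.2 q' (by omega)
  · rw [letter_lt _ (Nat.succ_pos t)]
    show ((⟨j-1, by omega⟩ : Fin k) : ℕ) + 1 = j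
    simp; omega
  · rw [← letter_tail, Fin.tail_cons]
    exact w.2.2.1
  · rintro ⟨w, hw⟩
    apply Subtype.ext
    have h0 : w 0 = ⟨j-1, by omega⟩ := by
      have h := hw.2.1
      rw [letter_lt _ (Nat.succ_pos t)] at h
      have : w ⟨0, Nat.succ_pos t⟩ = w 0 := rfl
      rw [this] at h
      exact Fin.ext (show ((w 0 : ℕ)) = j - 1 by omega)
    show Fin.cons (⟨j-1, by omega⟩ : Fin k) (Fin.tail w) = w
    rw [← h0, Fin.cons_self_tail]
  · rintro ⟨w, hw⟩
    apply Subtype.ext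
    have h := Fin.tail_cons (α := fun _ => Fin k) (⟨j-1, by omega⟩ : Fin k) w
    exact h

lemma cardS_low (t k j i : ℕ) (hij : i ≤ j + 1) :
    Nat.card {w : Fin t → Fin k // Avoids13d2 w ∧ letter w 0 = i ∧
        ∀ q, 1 ≤ q → ¬ (j < letter w q ∧ letter w q < i)} = a t k i := by
  apply Nat.card_congr
  exact ⟨fun w => ⟨w.1, w.2.1, w.2.2.1⟩,
         fun w => ⟨w.1, w.2.1, w.2.2, fun q _ => by omega⟩,
         fun w => rfl, fun w => rfl⟩

lemma a_gt (t k i : ℕ) (ht : 1 ≤ t) (h : k < i) : a t k i = 0 := by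
  have : IsEmpty {w : Fin t → Fin k // Avoids13d2 w ∧ letter w 0 = i} := by
    constructor
    rintro ⟨w, hw⟩
    have h2 := hw.2
    rw [letter_lt _ (by omega : 0 < t)] at h2
    have := (w ⟨0, by omega⟩).isLt
    omega
  simp [a, Nat.card_of_isEmpty]

lemma cardS_high (t k j i : ℕ) (hj : 1 ≤ j) (hji : j + 2 ≤ i) (hik : i ≤ k) :
    Nat.card {w : Fin t → Fin k // Avoids13d2 w ∧ letter w 0 = i ∧
        ∀ q, 1 ≤ q → ¬ (j < letter w q ∧ letter w q < i)}
      = a t (k - i + j + 1) (j + 1) := by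
  symm
  apply Nat.card_congr
  apply Equiv.ofBijective
    (f := fun w => (⟨fun p => psi k j i hji hik (w.1 p), ?_, ?_, ?_⟩ :
      {w : Fin t → Fin k // Avoids13d2 w ∧ letter w 0 = i ∧
        ∀ q, 1 ≤ q → ¬ (j < letter w q ∧ letter w q < i)}))
  -- bijectivity
  · constructor
    · rintro ⟨w, hw⟩ ⟨w', hw'⟩ h
      have h1 : (fun p => psi k j i hji hik (w p)) = fun p => psi k j i hji hik (w' p) :=
        congrArg Subtype.val h
      apply Subtype.ext
      funext p
      show w p = w' p
      have h2 : (psi k j i hji hik (w p) : ℕ) = (psi k j i hji hik (w' p) : ℕ) := by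
        rw [congrFun h1 p]
      simp only [psi] at h2
      have := (w p).isLt
      have := (w' p).isLt
      exact Fin.ext (by split_ifs at h2 <;> omega)
    · rintro ⟨w', h1, h2, h3⟩
      have hvals : ∀ p : Fin t, (w' p : ℕ) < j ∨ i - 1 ≤ (w' p : ℕ) := by
        intro p
        have hl : letter w' (p : ℕ) = (w' p : ℕ) + 1 := by
          rw [letter_lt _ p.isLt]
        rcases Nat.eq_zero_or_pos (p : ℕ) with hp | hp
        · rw [hp] at hl; rw [h2] at hl
          omega
        · have := h3 (p : ℕ) (by omega)
          rw [hl] at this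
          omega
      set u : Fin t → Fin (k - i + j + 1) := fun p =>
        ⟨if (w' p : ℕ) < j then (w' p : ℕ) else (w' p : ℕ) - (i - j - 1), by
          have := (w' p).isLt; split_ifs <;> omega⟩ with hu
      have hpsi : ∀ p, psi k j i hji hik (u p) = w' p := by
        intro p
        have hv := hvals p
        have := (w' p).isLt
        apply Fin.ext
        simp only [hu, psi]
        split_ifs <;> omega
      have he : (fun p => psi k j i hji hik (u p)) = w' := funext hpsi
      have hav : Avoids13d2 u := by
        rw [← avoids_psi_iff hji hik u, he]; exact h1
      have hl0 : letter u 0 = j + 1 := by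
        have hg : gmap j (i - j - 1) (letter u 0) = i := by
          rw [← letter_psi_comp hji hik u 0, he, h2]
        have hgj : gmap j (i - j - 1) (j + 1) = i := by
          simp only [gmap]; split_ifs <;> first | exact (‹False›).elim | omega
        exact gmap_inj (hg.trans hgj.symm)
      exact ⟨⟨u, hav, hl0⟩, Subtype.ext he⟩
  -- the three properties of the image
  · exact (avoids_psi_iff hji hik w.1).mpr w.2.1
  · rw [letter_psi_comp hji hik w.1 0, w.2.2]
    simp only [gmap]; split_ifs <;> first | exact (‹False›).elim | omega
  · intro q hq
    rw [letter_psi_comp hji hik w.1 q]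
    simp only [gmap]; split_ifs <;> first | exact (‹False›).elim | omega

lemma a_eq_sum (t k j : ℕ) (ht : 1 ≤ t) : a (t+1) k j = ∑ i ∈ Finset.Icc 1 k, cnt2 (t+1) k j i := by
  classical
  have e : {w : Fin (t+1) → Fin k // Avoids13d2 w ∧ letter w 0 = j} ≃
      Σ c : Fin k, {w : Fin (t+1) → Fin k //
        Avoids13d2 w ∧ letter w 0 = j ∧ letter w 1 = (c : ℕ) + 1} := by
    refine ⟨fun w => ⟨w.1 ⟨1, by omega⟩, ⟨w.1, w.2.1, w.2.2, ?_⟩⟩,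
            fun x => ⟨x.2.1, x.2.2.1, x.2.2.2.1⟩, ?_, ?_⟩
    · rw [letter_lt _ (by omega : 1 < t+1)]
    · rintro ⟨w, hw⟩; rfl
    · rintro ⟨c, w, hw⟩
      have hc : w ⟨1, by omega⟩ = c := by
        have h := hw.2.2
        rw [letter_lt _ (by omega : 1 < t+1)] at h
        exact Fin.ext (by omega)
      exact Sigma.subtype_ext hc rfl
  rw [show a (t+1) k j =
    Nat.card {w : Fin (t+1) → Fin k // Avoids13d2 w ∧ letter w 0 = j} from rfl]
  rw [Nat.card_congr e]
  haveI : ∀ c : Fin k, Fintype {w : Fin (t+1) → Fin k //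
      Avoids13d2 w ∧ letter w 0 = j ∧ letter w 1 = (c : ℕ) + 1} :=
    fun c => Fintype.ofFinite _
  rw [Nat.card_eq_fintype_card, Fintype.card_sigma]
  have h1 : ∀ c : Fin k, Fintype.card {w : Fin (t+1) → Fin k //
      Avoids13d2 w ∧ letter w 0 = j ∧ letter w 1 = (c : ℕ) + 1}
      = cnt2 (t+1) k j ((c : ℕ) + 1) := fun c => (Nat.card_eq_fintype_card).symm
  rw [Finset.sum_congr rfl (fun c _ => h1 c)]
  rw [Fin.sum_univ_eq_sum_range (fun c => cnt2 (t+1) k j (c+1)) k]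
  apply Finset.sum_nbij' (i := fun x => x + 1) (j := fun x => x - 1)
  · intro x hx; simp at hx ⊢; omega
  · intro x hx; simp at hx ⊢; omega
  · intro x hx; omega
  · intro x hx; simp at hx; omega
  · intro x hx; rfl

theorem stmt11 (n k j : ℕ) (hn : 2 ≤ n) (hk : 1 ≤ k) (hj1 : 1 ≤ j) (hjk : j ≤ k) :
    a n k j = (∑ i ∈ Finset.Icc 1 (j + 1), a (n - 1) k i) +
      ∑ i ∈ Finset.Icc (j + 1) (k - 1), a (n - 1) i (j + 1) := by
  obtain ⟨t, rfl⟩ : ∃ t, n = t + 1 := ⟨n - 1, by omega⟩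
  have ht : 1 ≤ t := by omega
  simp only [Nat.add_sub_cancel]
  rw [a_eq_sum t k j ht]
  have hF : ∀ i ∈ Finset.Icc 1 k, cnt2 (t+1) k j i
      = if i ≤ j + 1 then a t k i else a t (k - i + j + 1) (j + 1) := by
    intro i hi
    rw [Finset.mem_Icc] at hi
    rw [cnt2_eq t k j i hj1 hjk]
    split_ifs with h
    · exact cardS_low t k j i h
    · exact cardS_high t k j i hj1 (by omega) (by omega)
  rw [Finset.sum_congr rfl hF]
  rcases Nat.lt_or_ge j k with hjk' | hjk'
  · have hsplit : Finset.Icc 1 k = Finset.Icc 1 (j+1) ∪ Finset.Icc (j+2) k := by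
      ext x; simp only [Finset.mem_Icc, Finset.mem_union]; omega
    have hdisj : Disjoint (Finset.Icc 1 (j+1)) (Finset.Icc (j+2) k) := by
      rw [Finset.disjoint_left]
      intro x hx hx'
      simp only [Finset.mem_Icc] at hx hx'
      omega
    rw [hsplit, Finset.sum_union hdisj]
    congr 1
    · apply Finset.sum_congr rfl
      intro i hi
      rw [Finset.mem_Icc] at hi
      rw [if_pos hi.2]
    · have h1 : ∀ i ∈ Finset.Icc (j+2) k, (if i ≤ j + 1 then a t k i
          else a t (k - i + j + 1) (j + 1)) = a t (k - i + j + 1) (j + 1) := by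
        intro i hi
        rw [Finset.mem_Icc] at hi
        rw [if_neg (by omega)]
      rw [Finset.sum_congr rfl h1]
      apply Finset.sum_nbij' (i := fun x => k - x + j + 1) (j := fun y => k - y + j + 1)
      · intro x hx; simp only [Finset.mem_Icc] at hx ⊢; omega
      · intro y hy; simp only [Finset.mem_Icc] at hy ⊢; omega
      · intro x hx; simp only [Finset.mem_Icc] at hx; omega
      · intro y hy; simp only [Finset.mem_Icc] at hy; omega
      · intro x hx; rfl
  · -- here k ≤ j, so j = k
    rw [Finset.Icc_eq_empty (by omega : ¬ j + 1 ≤ k - 1), Finset.sum_empty, add_zero]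
    rw [Finset.sum_Icc_succ_top (by omega : 1 ≤ j + 1)]
    rw [a_gt t k (j+1) ht (by omega), add_zero]
    apply Finset.sum_congr (by rw [show j = k by omega])
    intro i hi
    rw [Finset.mem_Icc] at hi
    rw [if_pos (by omega)]
end

section
/- For every integer n ≥ 0, the number of words in [2]^n avoiding the pattern 122 equals F_{n+3} - 1, where F_m denotes the m-th Fibonacci number (F_1 = F_2 = 1). -/
/-- `w` avoids the pattern 122: there is no 0-based index `i` with `i + 2 < n`
such that `w i < w (i+1)` and `w (i+1) = w (i+2)`. -/
def Avoids122 {n k : ℕ} (w : Fin n → Fin k) : Prop :=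
  ∀ i : ℕ, i + 2 < n →
    ¬ (letter w i < letter w (i + 1) ∧ letter w (i + 1) = letter w (i + 2))

/-! Over `Fin 2` the pattern 122 is the factor `0 1 1`. Splitting off the first letter, `1 w`
avoids it iff `w` does, and `0 w` iff `w` does and does not start with `1 1`. Let `p n` count the
words of length `n` avoiding 122 and `q n` those words `w` for which `0 w` avoids 122. Then
`p (n + 1) = p n + q n`, and splitting off two more letters (`0 0 w ↦ 0 w`, `0 1 0 w ↦ 0 w`,
`0 1 1 w` forbidden) gives `q (n + 2) = q (n + 1) + q n`, so `q n = F (n + 2)` and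
`p n = F (n + 3) - 1`. -/

open Matrix

section Letters

variable {n k : ℕ}

@[simp]
lemma letter_vecCons_zero (a : Fin k) (w : Fin n → Fin k) : letter (vecCons a w) 0 = a + 1 := by
  simp [letter]

@[simp]
lemma letter_vecCons_succ (a : Fin k) (w : Fin n → Fin k) (i : ℕ) :
    letter (vecCons a w) (i + 1) = letter w i := by
  by_cases h : i < n <;> simp [letter, h]

lemma letter_eq_zero_of_le {w : Fin n → Fin k} {i : ℕ} (h : n ≤ i) : letter w i = 0 :=
  dif_neg h.not_gt

lemma letter_le (w : Fin n → Fin k) (i : ℕ) : letter w i ≤ k := by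
  unfold letter
  split
  · exact (w _).isLt
  · exact Nat.zero_le k

end Letters

section Avoidance

variable {n k : ℕ}

lemma avoids122_of_lt_three {w : Fin n → Fin k} (hn : n < 3) : Avoids122 w :=
  fun i hi => absurd hi (by omega)

lemma avoids122_vecCons_iff (a : Fin k) (w : Fin n → Fin k) :
    Avoids122 (vecCons a w) ↔
      ¬ ((a : ℕ) + 1 < letter w 0 ∧ letter w 0 = letter w 1) ∧ Avoids122 w := by
  constructor
  · intro h
    refine ⟨fun hhead => ?_, fun i hi => by simpa using h (i + 1) (by omega)⟩
    by_cases hn : 2 < n + 1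
    · exact h 0 hn (by simpa using hhead)
    · have h0 := hhead.2 ▸ letter_eq_zero_of_le (w := w) (i := 1) (by omega)
      omega
  · rintro ⟨hhead, htail⟩ (_ | i) hi
    · simpa using hhead
    · simpa using htail i (by omega)

lemma avoids122_vecCons_last_iff (w : Fin n → Fin (k + 1)) :
    Avoids122 (vecCons (Fin.last k) w) ↔ Avoids122 w := by
  rw [avoids122_vecCons_iff, Fin.val_last]
  exact and_iff_right (by have := letter_le w 0; omega)

end Avoidance

lemma Nat.card_subtype_pi_fin_succ {α : Type*} [Fintype α] {n : ℕ}
    (S : (Fin (n + 1) → α) → Prop) :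
    Nat.card {w // S w} = ∑ a, Nat.card {w : Fin n → α // S (vecCons a w)} := by
  calc Nat.card {w // S w} = Nat.card {p : α × (Fin n → α) // S (vecCons p.1 p.2)} :=
        Nat.card_congr ((Fin.consEquiv fun _ => α).subtypeEquiv fun _ => Iff.rfl).symm
    _ = _ := by
        rw [Nat.card_congr (Equiv.subtypeProdEquivSigmaSubtype fun a w => S (vecCons a w)),
          Nat.card_sigma]

lemma card_avoids122_vecCons_zero :
    ∀ n : ℕ, Nat.card {w : Fin n → Fin 2 // Avoids122 (vecCons 0 w)} = Nat.fib (n + 2)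
  | 0 => by
    rw [Nat.card_congr (Equiv.subtypeUnivEquiv fun _ => avoids122_of_lt_three (by norm_num))]
    simp
  | 1 => by
    rw [Nat.card_congr (Equiv.subtypeUnivEquiv fun _ => avoids122_of_lt_three (by norm_num))]
    simp [Nat.fib_add_two]
  | n + 2 => by
    have h00 (w : Fin (n + 1) → Fin 2) :
        Avoids122 (vecCons 0 (vecCons 0 w)) ↔ Avoids122 (vecCons 0 w) := by
      simp [avoids122_vecCons_iff (a := 0) (w := vecCons 0 w)]
    have h010 (w : Fin n → Fin 2) :
        Avoids122 (vecCons 0 (vecCons 1 (vecCons 0 w))) ↔ Avoids122 (vecCons 0 w) := by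
      rw [avoids122_vecCons_iff, show (1 : Fin 2) = Fin.last 1 from rfl,
        avoids122_vecCons_last_iff]
      simp
    have h011 (w : Fin n → Fin 2) : ¬ Avoids122 (vecCons 0 (vecCons 1 (vecCons 1 w))) := by
      simp [avoids122_vecCons_iff (a := 0)]
    calc _ = Nat.card {w : Fin (n + 1) → Fin 2 // Avoids122 (vecCons 0 (vecCons 0 w))} +
          Nat.card {w : Fin (n + 1) → Fin 2 // Avoids122 (vecCons 0 (vecCons 1 w))} := by
          rw [Nat.card_subtype_pi_fin_succ, Fin.sum_univ_two]
      _ = Nat.fib (n + 3) + (Nat.fib (n + 2) + 0) := by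
          have : IsEmpty {w : Fin n → Fin 2 // Avoids122 (vecCons 0 (vecCons 1 (vecCons 1 w)))} :=
            ⟨fun w => h011 w.1 w.2⟩
          rw [Nat.card_congr (Equiv.subtypeEquivRight h00), card_avoids122_vecCons_zero,
            Nat.card_subtype_pi_fin_succ, Fin.sum_univ_two,
            Nat.card_congr (Equiv.subtypeEquivRight h010), card_avoids122_vecCons_zero,
            Nat.card_of_isEmpty]
      _ = Nat.fib (n + 4) := by rw [add_zero, add_comm]; exact Nat.fib_add_two.symm

lemma card_avoids122_succ (n : ℕ) :
    Nat.card {w : Fin (n + 1) → Fin 2 // Avoids122 w} =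
      Nat.card {w : Fin n → Fin 2 // Avoids122 (vecCons 0 w)} +
        Nat.card {w : Fin n → Fin 2 // Avoids122 w} := by
  rw [Nat.card_subtype_pi_fin_succ, Fin.sum_univ_two]
  exact congrArg _ (Nat.card_congr (Equiv.subtypeEquivRight (avoids122_vecCons_last_iff (k := 1))))

theorem stmt15 (n : ℕ) :
    Nat.card {w : Fin n → Fin 2 // Avoids122 w} = Nat.fib (n + 3) - 1 := by
  induction n with
  | zero =>
    rw [Nat.card_congr (Equiv.subtypeUnivEquiv fun _ => avoids122_of_lt_three (by norm_num))]
    simp [Nat.fib_add_two]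
  | succ n ih =>
    have hfib : Nat.fib (n + 1 + 3) = Nat.fib (n + 2) + Nat.fib (n + 3) := Nat.fib_add_two
    rw [card_avoids122_succ, ih, card_avoids122_vecCons_zero, hfib]
    have := Nat.fib_pos.2 (show 0 < n + 3 by omega)
    omega
end
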